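/- For every ν > 0 and every t ≥ 0 one has |∫_{−√ν}^{√ν} e^{i t s} (1 − s²/ν)^{ν − 1/2} ds| ≤ 2100 · (e^{−t} + e^{−ν/5}). -/

import Mathlib

/-!
For `ν < 10` the bound is trivial: `1 - s²/ν ≤ 1` and `ν - 1/2 ≥ -1/2`, so the integrand is at
most `(1 - s²/ν)^(-1/2)`, whose integral over `[-√ν, √ν]` is `π √ν` (an arcsine).

For `ν ≥ 10` the integrand extends holomorphically to the upper half-plane (principal branch of
the power; it stays continuous at the branch points `±√ν` because `ν - 1/2 > 0`), and Cauchy's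
theorem moves the segment to the other three sides of the rectangle `[-√ν, √ν] × [0, 1]`.
On the top side `e^{itz}` has modulus `e^{-t}` and `|1 - z²/ν|^(ν - 1/2) ≤ e^{5/2 - x²/4}` is a
Gaussian. On the vertical sides `|1 - z²/ν|² ≤ 1/ν² + 4/ν ≤ 1/2`, so the power is at most
`e^{-ν/5}`. Both estimates come from `u ≤ e^{u - 1}` applied to `u = |1 - z²/ν|²`.
-/

noncomputable section
open MeasureTheory Real Set
open Complex (I)
open scoped Interval

theorem Real.exp_natCast_le_three_pow (n : ℕ) : exp n ≤ 3 ^ n := by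
  rw [← exp_one_pow]
  gcongr
  exact exp_one_lt_three.le

theorem Real.rpow_sub_half_le_one_div_sqrt {b ν : ℝ} (hb₀ : 0 < b) (hb₁ : b ≤ 1) (hν : 0 ≤ ν) :
    b ^ (ν - 1 / 2) ≤ 1 / √b := by
  calc b ^ (ν - 1 / 2) ≤ b ^ (-(1 / 2) : ℝ) := rpow_le_rpow_of_exponent_ge hb₀ hb₁ (by linarith)
    _ = 1 / √b := by rw [rpow_neg hb₀.le, sqrt_eq_rpow, inv_eq_one_div]

theorem Real.rpow_le_exp_sq_sub_one_mul {x p : ℝ} (hx : 0 ≤ x) (hp : 0 ≤ p) :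
    x ^ p ≤ exp ((x ^ 2 - 1) * (p / 2)) := by
  have hsq : x ^ 2 ≤ exp (x ^ 2 - 1) := by linarith [add_one_le_exp (x ^ 2 - 1)]
  calc x ^ p = (x ^ 2) ^ (p / 2) := by
        rw [← rpow_natCast, ← rpow_mul hx]; congr 1; ring
    _ ≤ exp (x ^ 2 - 1) ^ (p / 2) := by gcongr
    _ = exp ((x ^ 2 - 1) * (p / 2)) := (exp_mul _ _).symm

theorem Real.hasDerivAt_arcsin_of_mem_Ioo {x : ℝ} (hx : x ∈ Ioo (-1) 1) :
    HasDerivAt arcsin (1 / √(1 - x ^ 2)) x :=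
  hasDerivAt_arcsin hx.1.ne' hx.2.ne

theorem intervalIntegrable_one_div_sqrt_one_sub_sq :
    IntervalIntegrable (fun x : ℝ ↦ 1 / √(1 - x ^ 2)) volume (-1) 1 :=
  intervalIntegral.intervalIntegrable_deriv_of_nonneg continuous_arcsin.continuousOn
    (fun _ hx ↦ hasDerivAt_arcsin_of_mem_Ioo (by simpa using hx)) (fun _ _ ↦ by positivity)

theorem integral_one_div_sqrt_one_sub_sq : ∫ x in (-1 : ℝ)..1, 1 / √(1 - x ^ 2) = π := by
  rw [intervalIntegral.integral_eq_sub_of_hasDerivAt_of_le (by norm_num)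
    continuous_arcsin.continuousOn (fun _ hx ↦ hasDerivAt_arcsin_of_mem_Ioo hx)
    intervalIntegrable_one_div_sqrt_one_sub_sq]
  simp [arcsin_one, arcsin_neg]

theorem intervalIntegral_exp_neg_mul_sq_le {β a b : ℝ} (hβ : 0 < β) (hab : a ≤ b) :
    ∫ x in a..b, exp (-β * x ^ 2) ≤ √(π / β) := by
  rw [intervalIntegral.integral_of_le hab, ← integral_gaussian]
  exact setIntegral_le_integral (integrable_exp_neg_mul_sq hβ)
    (Filter.Eventually.of_forall fun _ ↦ (exp_pos _).le)

theorem Complex.norm_exp_I_mul_ofReal_mul (t : ℝ) (z : ℂ) :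
    ‖Complex.exp (I * t * z)‖ = Real.exp (-(t * z.im)) := by
  simp [Complex.norm_exp]

theorem norm_intervalIntegral_le_of_boundary_rect {E : Type*} [NormedAddCommGroup E]
    [NormedSpace ℂ E] [CompleteSpace E] {f : ℂ → E} {a b h : ℝ} (hab : a ≤ b) (hh : 0 ≤ h)
    (hc : ContinuousOn f ([[a, b]] ×ℂ [[0, h]])) (hd : DifferentiableOn ℂ f (Ioo a b ×ℂ Ioo 0 h)) :
    ‖∫ x in a..b, f x‖ ≤ ‖∫ x in a..b, f (x + h * I)‖ + ‖∫ y in 0..h, f (b + y * I)‖ +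
      ‖∫ y in 0..h, f (a + y * I)‖ := by
  have hrect := Complex.integral_boundary_rect_eq_zero_of_continuousOn_of_differentiableOn f a
    (b + h * I) (by simpa using hc) (by simpa [hab, hh] using hd)
  simp only [Complex.ofReal_re, Complex.ofReal_im, Complex.add_re, Complex.add_im,
    Complex.mul_re, Complex.mul_im, Complex.I_re, Complex.I_im, Complex.ofReal_zero, zero_mul,
    add_zero, mul_zero, sub_zero, mul_one, zero_add] at hrect
  rw [show ∫ x in a..b, f x = (∫ x in a..b, f (x + h * I)) - I • (∫ y in 0..h, f (b + y * I)) +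
      I • ∫ y in 0..h, f (a + y * I) by linear_combination (norm := module) hrect]
  grw [norm_add_le, norm_sub_le]
  simp [norm_smul]

def besselIntegral (ν t : ℝ) : ℂ :=
  ∫ s in (-√ν)..√ν, Complex.exp (I * t * s) * (((1 - s ^ 2 / ν) ^ (ν - 1 / 2) : ℝ) : ℂ)

theorem norm_besselIntegral_le_pi_mul_sqrt (ν t : ℝ) (hν : 0 < ν) :
    ‖besselIntegral ν t‖ ≤ π * √ν := by
  set r := √ν
  have hr : 0 < r := sqrt_pos.2 hν
  have hsub : ∀ u : ℝ, 1 - (r * u) ^ 2 / ν = 1 - u ^ 2 := fun u ↦ by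
    rw [mul_pow, sq_sqrt hν.le]; field_simp
  have hbound : ∀ᵐ u, u ∈ Ioc (-1 : ℝ) 1 → ‖Complex.exp (I * t * ↑(r * u)) *
      (((1 - (r * u) ^ 2 / ν) ^ (ν - 1 / 2) : ℝ) : ℂ)‖ ≤ 1 / √(1 - u ^ 2) := by
    -- `u = 1` is excluded since there `1 / √0 = 0`, while `0 ^ 0 = 1` when `ν = 1/2`
    filter_upwards [measure_eq_zero_iff_ae_notMem.1 (measure_singleton (1 : ℝ))] with u hu1 hu
    have hu2 : 0 < 1 - u ^ 2 := by
      have : u < 1 := lt_of_le_of_ne hu.2 hu1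
      nlinarith [hu.1]
    rw [norm_mul, Complex.norm_exp_I_mul_ofReal_mul, Complex.ofReal_im, mul_zero, neg_zero,
      exp_zero, one_mul, Complex.norm_real, norm_of_nonneg (rpow_nonneg (hsub u ▸ hu2.le) _), hsub]
    exact rpow_sub_half_le_one_div_sqrt hu2 (by nlinarith) hν.le
  have hscale := intervalIntegral.smul_integral_comp_mul_left
    (fun s : ℝ ↦ Complex.exp (I * t * s) * (((1 - s ^ 2 / ν) ^ (ν - 1 / 2) : ℝ) : ℂ)) r
    (a := -1) (b := 1)
  rw [mul_neg_one, mul_one] at hscale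
  rw [besselIntegral, ← hscale, norm_smul, norm_of_nonneg hr.le, mul_comm π,
    ← integral_one_div_sqrt_one_sub_sq]
  gcongr
  exact intervalIntegral.norm_integral_le_of_norm_le (by norm_num) hbound
    intervalIntegrable_one_div_sqrt_one_sub_sq

theorem norm_one_sub_sq_div_sq (ν x y : ℝ) :
    ‖1 - (x + y * I) ^ 2 / ν‖ ^ 2 = (1 - (x ^ 2 - y ^ 2) / ν) ^ 2 + (2 * x * y / ν) ^ 2 := by
  rw [Complex.sq_norm, Complex.normSq_apply]
  simp only [Complex.sub_re, Complex.sub_im, Complex.one_re, Complex.one_im,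
    Complex.div_ofReal_re, Complex.div_ofReal_im, pow_two, Complex.mul_re, Complex.mul_im,
    Complex.add_re, Complex.add_im, Complex.ofReal_re, Complex.ofReal_im, Complex.I_re,
    Complex.I_im]
  ring

def besselIntegrand (ν t : ℝ) (z : ℂ) : ℂ :=
  Complex.exp (I * t * z) * (1 - z ^ 2 / ν) ^ ((ν : ℂ) - 1 / 2)

section besselIntegrand

variable {ν t : ℝ}

theorem besselIntegrand_ofReal {s : ℝ} (hs : 0 ≤ 1 - s ^ 2 / ν) :
    besselIntegrand ν t s =
      Complex.exp (I * t * s) * (((1 - s ^ 2 / ν) ^ (ν - 1 / 2) : ℝ) : ℂ) := by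
  rw [besselIntegrand, Complex.ofReal_cpow hs]
  push_cast
  rfl

theorem besselIntegral_eq_integral_besselIntegrand (hν : 0 < ν) :
    besselIntegral ν t = ∫ s in (-√ν)..√ν, besselIntegrand ν t s := by
  refine intervalIntegral.integral_congr fun s hs ↦ (besselIntegrand_ofReal ?_).symm
  rw [uIcc_of_le (neg_le_self (sqrt_nonneg ν)), mem_Icc, ← Real.sq_le hν.le] at hs
  rwa [sub_nonneg, div_le_one hν]

theorem norm_besselIntegrand (z : ℂ) :
    ‖besselIntegrand ν t z‖ = Real.exp (-(t * z.im)) * ‖1 - z ^ 2 / ν‖ ^ (ν - 1 / 2) := by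
  rw [besselIntegrand, norm_mul, Complex.norm_exp_I_mul_ofReal_mul, ← Complex.norm_cpow_real]
  push_cast
  rfl

theorem one_sub_sq_div_mem_slitPlane (hν : 0 < ν) {z : ℂ} (hz : 0 < z.im) :
    1 - z ^ 2 / ν ∈ Complex.slitPlane := by
  rw [Complex.mem_slitPlane_iff]
  simp only [Complex.sub_re, Complex.sub_im, Complex.one_re, Complex.one_im,
    Complex.div_ofReal_re, Complex.div_ofReal_im, pow_two, Complex.mul_re, Complex.mul_im]
  rcases eq_or_ne z.re 0 with hre | hre
  · left
    rw [hre, zero_mul, zero_sub, neg_div, sub_neg_eq_add]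
    positivity
  · right
    rw [zero_sub, neg_ne_zero, mul_comm z.im, ← two_mul]
    exact div_ne_zero (mul_ne_zero two_ne_zero (mul_ne_zero hre hz.ne')) hν.ne'

theorem continuousAt_besselIntegrand (hν : 1 / 2 < ν) {z : ℂ} (him : 0 ≤ z.im)
    (hre : z.re ^ 2 ≤ ν) : ContinuousAt (besselIntegrand ν t) z := by
  have hbase : 0 ≤ (1 - z ^ 2 / ν).re ∨ (1 - z ^ 2 / ν).im ≠ 0 := by
    rcases him.eq_or_lt with him | him
    · left
      simp only [Complex.sub_re, Complex.one_re, Complex.div_ofReal_re, pow_two, Complex.mul_re,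
        ← him, mul_zero, sub_zero, sub_nonneg]
      rw [div_le_one (by linarith)]
      nlinarith
    · exact (Complex.mem_slitPlane_iff.1 (one_sub_sq_div_mem_slitPlane (by linarith) him)).imp
        le_of_lt id
  refine (by fun_prop : Continuous fun z : ℂ ↦ Complex.exp (I * t * z)).continuousAt.mul ?_
  refine (Complex.continuousAt_cpow_const_of_re_pos hbase ?_).comp (x := z)
    (f := fun z : ℂ ↦ 1 - z ^ 2 / ν) (by fun_prop)
  simpa using hν

theorem differentiableAt_besselIntegrand (hν : 0 < ν) {z : ℂ} (hz : 0 < z.im) :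
    DifferentiableAt ℂ (besselIntegrand ν t) z :=
  (by fun_prop : Differentiable ℂ fun z : ℂ ↦ Complex.exp (I * t * z)).differentiableAt.mul
    ((by fun_prop : DifferentiableAt ℂ (fun z : ℂ ↦ 1 - z ^ 2 / ν) z).cpow_const
      (one_sub_sq_div_mem_slitPlane hν hz))

theorem norm_besselIntegrand_add_I_le (hν : 1 ≤ ν) {x : ℝ} (hx : x ^ 2 ≤ ν) :
    ‖besselIntegrand ν t (x + I)‖
      ≤ Real.exp (-t) * Real.exp (5 / 2) * Real.exp (-(1 / 4) * x ^ 2) := by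
  have hν₀ : 0 < ν := by linarith
  have hnorm := norm_one_sub_sq_div_sq ν x 1
  simp only [Complex.ofReal_one, one_mul, one_pow, mul_one] at hnorm
  have hexp : ((1 - (x ^ 2 - 1) / ν) ^ 2 + (2 * x / ν) ^ 2 - 1) * ((ν - 1 / 2) / 2)
      ≤ 5 / 2 - x ^ 2 / 4 := by
    rw [show (1 - (x ^ 2 - 1) / ν) ^ 2 + (2 * x / ν) ^ 2 - 1
        = ((ν + 1 - x ^ 2) ^ 2 + 4 * x ^ 2 - ν ^ 2) / ν ^ 2 by field_simp; ring,
      div_mul_eq_mul_div, div_le_iff₀ (by positivity)]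
    nlinarith [mul_nonneg (sub_nonneg.2 hx) (sub_nonneg.2 hν),
      mul_nonneg (mul_nonneg (sub_nonneg.2 hx) (sq_nonneg x)) hν₀.le]
  rw [norm_besselIntegrand, Complex.add_im, Complex.ofReal_im, Complex.I_im, zero_add, mul_one,
    mul_assoc, ← Real.exp_add]
  gcongr
  refine (rpow_le_exp_sq_sub_one_mul (norm_nonneg _) (by linarith)).trans ?_
  rw [hnorm, exp_le_exp]
  linarith

theorem norm_besselIntegrand_add_mul_I_le (hν : 10 ≤ ν) (ht : 0 ≤ t) {c y : ℝ} (hc : c ^ 2 = ν)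
    (hy : y ∈ Icc 0 1) : ‖besselIntegrand ν t (c + y * I)‖ ≤ Real.exp (-ν / 5) := by
  have hν₀ : 0 < ν := by linarith
  have hsq : ‖1 - (c + y * I) ^ 2 / ν‖ ^ 2 ≤ 1 / 2 := by
    have hre : 1 - (c ^ 2 - y ^ 2) / ν = y ^ 2 / ν := by rw [hc]; field_simp; ring
    rw [norm_one_sub_sq_div_sq, hre, show (y ^ 2 / ν) ^ 2 + (2 * c * y / ν) ^ 2
        = (y ^ 2 * y ^ 2 + 4 * c ^ 2 * y ^ 2) / ν ^ 2 by field_simp; ring, hc,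
      div_le_iff₀ (by positivity)]
    have hy2 : y ^ 2 ≤ 1 := by nlinarith [hy.1, hy.2]
    nlinarith [mul_le_one₀ hy2 (sq_nonneg y) hy2]
  rw [norm_besselIntegrand, Complex.add_im, Complex.ofReal_im, Complex.mul_im, Complex.ofReal_re,
    Complex.ofReal_im, Complex.I_re, Complex.I_im, zero_add, mul_one, zero_mul, add_zero]
  calc Real.exp (-(t * y)) * ‖1 - (c + y * I) ^ 2 / ν‖ ^ (ν - 1 / 2)
      ≤ 1 * Real.exp ((1 / 2 - 1) * ((ν - 1 / 2) / 2)) := by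
        gcongr
        · exact exp_le_one_iff.2 (by nlinarith [hy.1])
        · exact (rpow_le_exp_sq_sub_one_mul (norm_nonneg _) (by linarith)).trans
            (exp_le_exp.2 (by gcongr; linarith))
    _ ≤ Real.exp (-ν / 5) := by
        rw [one_mul, exp_le_exp]
        linarith

theorem norm_integral_besselIntegrand_add_I_le (hν : 1 ≤ ν) :
    ‖∫ x in (-√ν)..√ν, besselIntegrand ν t (x + I)‖
      ≤ Real.exp (-t) * Real.exp (5 / 2) * √(4 * π) := by
  have hr : -√ν ≤ √ν := neg_le_self (sqrt_nonneg ν)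
  calc ‖∫ x in (-√ν)..√ν, besselIntegrand ν t (x + I)‖
      ≤ ∫ x in (-√ν)..√ν, Real.exp (-t) * Real.exp (5 / 2) * Real.exp (-(1 / 4) * x ^ 2) :=
        intervalIntegral.norm_integral_le_of_norm_le hr
          (Filter.Eventually.of_forall fun x hx ↦ norm_besselIntegrand_add_I_le hν
            ((Real.sq_le (by linarith)).2 ⟨hx.1.le, hx.2⟩))
          (Continuous.intervalIntegrable (by fun_prop) _ _)
    _ = Real.exp (-t) * Real.exp (5 / 2) * ∫ x in (-√ν)..√ν, Real.exp (-(1 / 4) * x ^ 2) :=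
        intervalIntegral.integral_const_mul _ _
    _ ≤ Real.exp (-t) * Real.exp (5 / 2) * √(π / (1 / 4)) := by
        gcongr
        exact intervalIntegral_exp_neg_mul_sq_le (by norm_num) hr
    _ = Real.exp (-t) * Real.exp (5 / 2) * √(4 * π) := by
        rw [div_div_eq_mul_div, div_one, mul_comm π]

theorem norm_integral_besselIntegrand_add_mul_I_le (hν : 10 ≤ ν) (ht : 0 ≤ t) {c : ℝ}
    (hc : c ^ 2 = ν) :
    ‖∫ y in (0 : ℝ)..1, besselIntegrand ν t (c + y * I)‖ ≤ Real.exp (-ν / 5) := by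
  have hbound : ∀ y ∈ Ι (0 : ℝ) 1, ‖besselIntegrand ν t (c + y * I)‖ ≤ Real.exp (-ν / 5) :=
    fun y hy ↦ norm_besselIntegrand_add_mul_I_le hν ht hc
      (Ioc_subset_Icc_self (by rwa [uIoc_of_le zero_le_one] at hy))
  simpa using intervalIntegral.norm_integral_le_of_norm_le_const hbound

theorem norm_besselIntegral_le_of_ten_le (hν : 10 ≤ ν) (ht : 0 ≤ t) :
    ‖besselIntegral ν t‖ ≤ Real.exp (-t) * Real.exp (5 / 2) * √(4 * π) + 2 * Real.exp (-ν / 5) := by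
  have hν₀ : 0 < ν := by linarith
  have hr : -√ν ≤ √ν := neg_le_self (sqrt_nonneg ν)
  have hcont : ContinuousOn (besselIntegrand ν t) ([[-√ν, √ν]] ×ℂ [[0, 1]]) := by
    intro z hz
    rw [Complex.mem_reProdIm, uIcc_of_le hr, uIcc_of_le zero_le_one, mem_Icc,
      ← Real.sq_le hν₀.le] at hz
    exact (continuousAt_besselIntegrand (by linarith) hz.2.1 hz.1).continuousWithinAt
  have hdiff : DifferentiableOn ℂ (besselIntegrand ν t) (Ioo (-√ν) √ν ×ℂ Ioo 0 1) := fun z hz ↦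
    (differentiableAt_besselIntegrand hν₀ hz.2.1).differentiableWithinAt
  have htop := norm_integral_besselIntegrand_add_I_le (t := t) (by linarith : 1 ≤ ν)
  have hright := norm_integral_besselIntegrand_add_mul_I_le hν ht (sq_sqrt hν₀.le)
  have hleft := norm_integral_besselIntegrand_add_mul_I_le hν ht (c := -√ν)
    (by rw [neg_sq, sq_sqrt hν₀.le])
  rw [besselIntegral_eq_integral_besselIntegrand hν₀]
  refine (norm_intervalIntegral_le_of_boundary_rect hr zero_le_one hcont hdiff).trans ?_
  simp only [Complex.ofReal_one, one_mul]
  linarith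

end besselIntegrand

theorem bessel_integral_bound (ν t : ℝ) (hν : 0 < ν) (ht : 0 ≤ t) :
    ‖∫ s in (-Real.sqrt ν)..(Real.sqrt ν),
        Complex.exp (Complex.I * t * s) * (((1 - s ^ 2 / ν) ^ (ν - 1/2) : ℝ) : ℂ)‖
      ≤ 2100 * (Real.exp (-t) + Real.exp (-ν / 5)) := by
  change ‖besselIntegral ν t‖ ≤ _
  rcases lt_or_ge ν 10 with hsmall | hlarge
  · have hsqrt : √ν ≤ 4 := (sqrt_le_left (by norm_num)).2 (by linarith)
    have hexp : 1 ≤ 9 * Real.exp (-ν / 5) := calc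
      1 = Real.exp 2 * Real.exp (-2) := by rw [← exp_add]; norm_num
      _ ≤ 9 * Real.exp (-ν / 5) := by
          gcongr
          · exact (exp_natCast_le_three_pow 2).trans_eq (by norm_num)
          · linarith
    calc ‖besselIntegral ν t‖ ≤ π * √ν := norm_besselIntegral_le_pi_mul_sqrt ν t hν
      _ ≤ 4 * 4 := by gcongr; exact pi_le_four
      _ ≤ 2100 * (Real.exp (-t) + Real.exp (-ν / 5)) := by nlinarith [exp_pos (-t)]
  · have h4π : √(4 * π) ≤ 4 := (sqrt_le_left (by norm_num)).2 (by nlinarith [pi_le_four])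
    have h52 : Real.exp (5 / 2) ≤ 27 := calc
      Real.exp (5 / 2) ≤ Real.exp 3 := exp_le_exp.2 (by norm_num)
      _ ≤ 27 := (exp_natCast_le_three_pow 3).trans_eq (by norm_num)
    calc ‖besselIntegral ν t‖
        ≤ Real.exp (-t) * Real.exp (5 / 2) * √(4 * π) + 2 * Real.exp (-ν / 5) :=
          norm_besselIntegral_le_of_ten_le hlarge ht
      _ ≤ Real.exp (-t) * 27 * 4 + 2 * Real.exp (-ν / 5) := by gcongr
      _ ≤ 2100 * (Real.exp (-t) + Real.exp (-ν / 5)) := by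
          linarith [exp_pos (-t), exp_pos (-ν / 5)]
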